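/- Lemma 3.11 (key claim in the proof of the estimate from above for R^ε). Let K satisfy the stated kernel conditions, let φ : (0,T]×ℝ^N → ℝ be bounded and C², and let (t₀,x₀) ∈ (0,T)×ℝ^N. There exists o : (0,1)×(0,1) → [0,∞) with o(ε,r) → 0 as (ε,r) → (0,0) such that for all sufficiently small ε, r > 0, all (t,x) in the ball B_r(t₀,x₀), and every (y,ψ) ∈ C^+(x) with Dψ(y) ≠ 0, κ*[y,ψ] > 0 and inf_{z ∈ P^+(x,y,ψ)} φ(t + T_P(y,ψ), z) > φ(t + ε², x) − ε³, the following hold with t⁺ := t + T_P(y,ψ): inf_{z ∈ P^+(x,y,ψ)} φ(t⁺,z) − φ(t⁺,y) ≤ T_P(y,ψ)·(κ⁺·|D_xφ(t₀,x₀)| + o(ε,r)) − ε|D_xφ(t⁺,y)|, where κ⁺·|D_xφ(t₀,x₀)| denotes max(κ*[x₀,φ(t₀,·)],0)·|D_xφ(t₀,x₀)| if D_xφ(t₀,x₀) ≠ 0 and 0 if D_xφ(t₀,x₀) = 0; moreover, if D_xφ(t₀,x₀) ≠ 0, then κ*[y,ψ] ≤ κ*[x₀,φ(t₀,·)] + o(ε,r)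 and T_P(y,ψ) = min(ε/κ*[y,ψ], ε^{1/2}). -/

import Mathlib

open MeasureTheory Metric Set Filter Topology RealInnerProductSpace

noncomputable section

attribute [local instance] Classical.propDecidable

/-- ℝ^N. -/
abbrev Euc (N : ℕ) := EuclideanSpace ℝ (Fin N)

/-- The paraboloid `Q(r,e) = {z : r|z·e| ≤ |z − (z·e)e|²}`. -/
def parab {N : ℕ} (r : ℝ) (e : Euc N) : Set (Euc N) :=
  {z | r * |⟪z, e⟫| ≤ ‖z - ⟪z, e⟫ • e‖ ^ 2}

/-- The conditions on the interaction kernel `K`. -/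
def KernelOK {N : ℕ} (R : ℝ) (K : Euc N → ℝ) : Prop :=
  (∀ z, 0 ≤ K z) ∧ (∀ z, K (-z) = K z) ∧ Function.support K ⊆ ball (0 : Euc N) R ∧
  -- K ∈ W^{1,1}(ℝ^N ∖ B_δ(0)) for every δ > 0
  (∀ δ > (0:ℝ), IntegrableOn K ((ball (0 : Euc N) δ)ᶜ) volume ∧
    DifferentiableOn ℝ K ((closedBall (0 : Euc N) δ)ᶜ) ∧
    IntegrableOn (fun z => ‖fderiv ℝ K z‖) ((ball (0 : Euc N) δ)ᶜ) volume) ∧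
  -- ∫_{B_δ(0)} K = o(1/δ)
  (∀ δ > (0:ℝ), IntegrableOn K (ball (0 : Euc N) δ) volume) ∧
  Tendsto (fun δ : ℝ => δ * ∫ z in ball (0 : Euc N) δ, K z) (𝓝[>] 0) (𝓝 0) ∧
  -- ∫_{Q(r,e)} K < ∞ for all r > 0 and ∫_{Q(r,e)} K = o(1/r)
  (∀ e : Euc N, ‖e‖ = 1 →
    (∀ r > (0:ℝ), IntegrableOn K (parab r e) volume) ∧
    Tendsto (fun r : ℝ => r * ∫ z in parab r e, K z) (𝓝[>] 0) (𝓝 0))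

/-- The upper integral curvature `κ*[x,U]`, defined as a principal value. -/
def kSt {N : ℕ} (K : Euc N → ℝ) (U : Euc N → ℝ) (x : Euc N) : ℝ :=
  limUnder (𝓝[>] (0:ℝ)) (fun δ =>
    ∫ z in (ball (0 : Euc N) δ)ᶜ, K z * (if U x ≤ U (x + z) then (1:ℝ) else -1))

/-- The lower integral curvature `κ_*[x,U]`, defined as a principal value. -/
def kLo {N : ℕ} (K : Euc N → ℝ) (U : Euc N → ℝ) (x : Euc N) : ℝ :=
  limUnder (𝓝[>] (0:ℝ)) (fun δ =>
    ∫ z in (ball (0 : Euc N) δ)ᶜ, K z * (if U x < U (x + z) then (1:ℝ) else -1))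

/-- The cut-off function `C_ε(r) = (r ∨ ε^{3/2}) ∧ ε^{1/2}`. -/
def cutC (ε r : ℝ) : ℝ := min (max r (ε ^ ((3:ℝ)/2))) (ε ^ ((1:ℝ)/2))

/-- Paul's time increment `T_P(y,ψ)`. -/
def TPg {N : ℕ} (K : Euc N → ℝ) (ε : ℝ) (y : Euc N) (ψ : Euc N → ℝ) : ℝ :=
  if gradient ψ y ≠ 0 ∧ 0 < kSt K ψ y then cutC ε (ε / kSt K ψ y) else ε ^ 2

/-- Carol's time increment `T_C(y,ψ)`. -/
def TCg {N : ℕ} (K : Euc N → ℝ) (ε : ℝ) (y : Euc N) (ψ : Euc N → ℝ) : ℝ :=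
  if gradient ψ y ≠ 0 ∧ kLo K ψ y < 0 then cutC ε (ε / |kLo K ψ y|) else ε ^ 2

/-- Admissible choices `C^+(x)` of a point and a hypersurface. -/
def Cplus {N : ℕ} (ε : ℝ) (x : Euc N) : Set (Euc N × (Euc N → ℝ)) :=
  {p | p.1 ∈ ball x ε ∧ ContDiff ℝ 2 p.2 ∧ p.2 x ≤ p.2 p.1}

/-- Admissible choices `C^-(x)` of a point and a hypersurface. -/
def Cminus {N : ℕ} (ε : ℝ) (x : Euc N) : Set (Euc N × (Euc N → ℝ)) :=
  {p | p.1 ∈ ball x ε ∧ ContDiff ℝ 2 p.2 ∧ p.2 p.1 ≤ p.2 x}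

/-- The target set `P^+(x,y,ψ)`. -/
def Pplus {N : ℕ} (K : Euc N → ℝ) (R : ℝ) (x y : Euc N) (ψ : Euc N → ℝ) : Set (Euc N) :=
  if gradient ψ y ≠ 0 ∧ 0 < kSt K ψ y then {z | z ∈ ball y R ∧ ψ y ≤ ψ z} else {x}

/-- The target set `P^-(x,y,ψ)`. -/
def Pminus {N : ℕ} (K : Euc N → ℝ) (R : ℝ) (x y : Euc N) (ψ : Euc N → ℝ) : Set (Euc N) :=
  if gradient ψ y ≠ 0 ∧ kLo K ψ y < 0 then {z | z ∈ ball y R ∧ ψ z ≤ ψ y} else {x}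

/-- The operator `R^ε[φ]`. -/
def Rg {N : ℕ} (K : Euc N → ℝ) (R ε : ℝ) (φ : ℝ → Euc N → ℝ) (t : ℝ) (x : Euc N) : ℝ :=
  sSup ((fun p : Euc N × (Euc N → ℝ) =>
      sInf ((fun z => φ (t + TPg K ε p.1 p.2) z) '' Pplus K R x p.1 p.2)) '' Cplus ε x)

/-- The operator `R_ε[φ]`. -/
def Rgl {N : ℕ} (K : Euc N → ℝ) (R ε : ℝ) (φ : ℝ → Euc N → ℝ) (t : ℝ) (x : Euc N) : ℝ :=
  sInf ((fun p : Euc N × (Euc N → ℝ) =>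
      sSup ((fun z => φ (t + TCg K ε p.1 p.2) z) '' Pminus K R x p.1 p.2)) '' Cminus ε x)

/-- The one-step game operator `S^ε[φ] = R^ε[R_ε[φ]]` for the integral curvature game. -/
def Sg {N : ℕ} (K : Euc N → ℝ) (R ε : ℝ) (φ : ℝ → Euc N → ℝ) (t : ℝ) (x : Euc N) : ℝ :=
  Rg K R ε (fun s y => Rgl K R ε φ s y) t x

/-- Viscosity subsolution of `−∂_t u − κ[x,u]|Du| = 0` on `(0,T)×ℝ^N`. -/
def CurvSubsol {N : ℕ} (K : Euc N → ℝ) (R T : ℝ) (u : ℝ → Euc N → ℝ) : Prop :=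
  UpperSemicontinuousOn (fun p : ℝ × Euc N => u p.1 p.2) (Ioo (0:ℝ) T ×ˢ univ) ∧
  ∀ φ : ℝ → Euc N → ℝ,
    ContDiffOn ℝ 2 (fun p : ℝ × Euc N => φ p.1 p.2) (Ioo (0:ℝ) T ×ˢ univ) →
    ∀ t ∈ Ioo (0:ℝ) T, ∀ x : Euc N,
      -- u − φ attains a strict maximum on (0,T) × B_{R+1}(x) at (t,x)
      (∀ s ∈ Ioo (0:ℝ) T, ∀ y ∈ ball x (R + 1), (s, y) ≠ (t, x) →
        u s y - φ s y < u t x - φ t x) →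
      ((gradient (φ t) x ≠ 0 →
          -(deriv (fun s => φ s x) t) - kSt K (φ t) x * ‖gradient (φ t) x‖ ≤ 0) ∧
       (gradient (φ t) x = 0 → -(deriv (fun s => φ s x) t) ≤ 0))

/-- Viscosity supersolution of `−∂_t u − κ[x,u]|Du| = 0` on `(0,T)×ℝ^N`. -/
def CurvSupersol {N : ℕ} (K : Euc N → ℝ) (R T : ℝ) (u : ℝ → Euc N → ℝ) : Prop :=
  LowerSemicontinuousOn (fun p : ℝ × Euc N => u p.1 p.2) (Ioo (0:ℝ) T ×ˢ univ) ∧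
  ∀ φ : ℝ → Euc N → ℝ,
    ContDiffOn ℝ 2 (fun p : ℝ × Euc N => φ p.1 p.2) (Ioo (0:ℝ) T ×ˢ univ) →
    ∀ t ∈ Ioo (0:ℝ) T, ∀ x : Euc N,
      -- u − φ attains a strict minimum on (0,T) × B_{R+1}(x) at (t,x)
      (∀ s ∈ Ioo (0:ℝ) T, ∀ y ∈ ball x (R + 1), (s, y) ≠ (t, x) →
        u t x - φ t x < u s y - φ s y) →
      ((gradient (φ t) x ≠ 0 →
          0 ≤ -(deriv (fun s => φ s x) t) - kLo K (φ t) x * ‖gradient (φ t) x‖) ∧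
       (gradient (φ t) x = 0 → 0 ≤ -(deriv (fun s => φ s x) t)))

/-- Upper relaxed semi-limit `limsup* u^ε`. -/
def relaxSup {N : ℕ} (u : ℝ → ℝ → Euc N → ℝ) (t : ℝ) (x : Euc N) : ℝ :=
  sInf {a | ∃ δ > (0:ℝ), a = sSup ((fun q : ℝ × ℝ × Euc N => u q.1 q.2.1 q.2.2) ''
    {q | 0 < q.1 ∧ q.1 < δ ∧ |q.2.1 - t| < δ ∧ dist q.2.2 x < δ})}

/-- Lower relaxed semi-limit `liminf* u^ε`. -/
def relaxInf {N : ℕ} (u : ℝ → ℝ → Euc N → ℝ) (t : ℝ) (x : Euc N) : ℝ :=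
  sSup {a | ∃ δ > (0:ℝ), a = sInf ((fun q : ℝ × ℝ × Euc N => u q.1 q.2.1 q.2.2) ''
    {q | 0 < q.1 ∧ q.1 < δ ∧ |q.2.1 - t| < δ ∧ dist q.2.2 x < δ})}

open scoped NNReal

/-!
Because `K` is integrable, `κ*[x, U]` is the integral of `K` against `±1` on the superlevel set
`{U (x + ·) ≥ U x}` over the punctured space. Hence the curvature is monotone under inclusion of
superlevel sets inside `B_R`, up to twice the `K`-mass of the region where the inclusion fails.

The hypothesis on the infimum says that on Paul's set `P⁺ = {ψ ≥ ψ y} ∩ B_R(y)` the function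
`φ(t⁺, ·)` stays above `φ(t + ε², x) - ε³`. Since `φ` is Lipschitz near `(t₀, x₀)` and all the
points compared are within `ω = r + √ε` of it, the superlevel set of `ψ` at `y`, translated to
`x₀`, lies in `{φ(t₀, x₀ + ·) ≥ φ(t₀, x₀) - (2L + 1) ω}`. This bounds `κ*[y, ψ]` by
`κ*[x₀, φ(t₀, ·)]` plus the `K`-mass of a thin strip below the level `φ(t₀, x₀)`, which vanishes
as `ω → 0`.

For the first estimate, `y ∈ P⁺` makes the left side nonpositive, while
`T_P · max(κ*[y, ψ], √ε) = ε` together with the Lipschitz bound on `Dφ` make the right side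
nonnegative.
-/

theorem tendsto_setIntegral_of_eventually_mem_iff {α E ι : Type*} [MeasurableSpace α]
    [NormedAddCommGroup E] [NormedSpace ℝ E] {μ : Measure α} {l : Filter ι}
    [l.IsCountablyGenerated] {f : α → E} (hf : Integrable f μ) {As : ι → Set α} {A : Set α}
    (hAs : ∀ i, MeasurableSet (As i)) (hA : MeasurableSet A)
    (h_lim : ∀ x, ∀ᶠ i in l, x ∈ As i ↔ x ∈ A) :
    Tendsto (fun i => ∫ x in As i, f x ∂μ) l (𝓝 (∫ x in A, f x ∂μ)) := by
  simp_rw [← integral_indicator (hAs _), ← integral_indicator hA]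
  refine tendsto_integral_filter_of_dominated_convergence (fun x => ‖f x‖)
    (.of_forall fun i => hf.aestronglyMeasurable.indicator (hAs i))
    (.of_forall fun i => .of_forall fun x => norm_indicator_le_norm_self f x) hf.norm
    (.of_forall fun x => tendsto_const_nhds.congr' ?_)
  filter_upwards [h_lim x] with i hi
  simp only [indicator_apply, hi]

section SignedIntegral

variable {α : Type*} [MeasurableSpace α] {μ : Measure α} {K : α → ℝ}

theorem MeasureTheory.Integrable.mul_sign (hK : Integrable K μ) {p : α → Prop} [DecidablePred p]
    (hp : MeasurableSet {z | p z}) :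
    Integrable (fun z => K z * if p z then 1 else -1) μ :=
  hK.mul_bdd (c := 1) ((Measurable.ite hp measurable_const measurable_const).aestronglyMeasurable)
    (.of_forall fun z => by split_ifs <;> simp)

theorem integral_mul_sign_le_add (hK : ∀ z, 0 ≤ K z) (hKi : Integrable K μ)
    {p q : α → Prop} [DecidablePred p] [DecidablePred q]
    (hp : MeasurableSet {z | p z}) (hq : MeasurableSet {z | q z})
    {A : Set α} (hA : MeasurableSet A) (hpq : ∀ z, K z ≠ 0 → p z → q z ∨ z ∈ A) :
    ∫ z, K z * (if p z then 1 else -1) ∂μ ≤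
      ∫ z, K z * (if q z then 1 else -1) ∂μ + 2 * ∫ z in A, K z ∂μ := by
  rw [← integral_indicator hA, ← integral_const_mul,
    ← integral_add (hKi.mul_sign hq) ((hKi.indicator hA).const_mul 2)]
  refine integral_mono (hKi.mul_sign hp) ((hKi.mul_sign hq).add ((hKi.indicator hA).const_mul 2))
    fun z => ?_
  have hKz := hK z
  rw [indicator_apply]
  rcases eq_or_ne (K z) 0 with hK0 | hK0
  · simp [hK0]
  split_ifs <;> try linarith
  exact absurd (hpq z hK0 ‹_›) (by tauto)

end SignedIntegral

section Curvature

variable {N : ℕ} {K : Euc N → ℝ}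

theorem KernelOK.integrable {R : ℝ} (hK : KernelOK R K) : Integrable K := by
  obtain ⟨-, -, -, hout, hin, -⟩ := hK
  have h := (hin 1 one_pos).union (hout 1 one_pos).1
  rwa [union_compl_self, integrableOn_univ] at h

theorem measurableSet_le_translate {U : Euc N → ℝ} (hU : Measurable U) (x : Euc N) (c : ℝ) :
    MeasurableSet {z | c ≤ U (x + z)} :=
  measurableSet_le measurable_const (hU.comp (measurable_const_add x))

theorem kSt_eq_setIntegral (hK : Integrable K) {U : Euc N → ℝ} (hU : Measurable U) (x : Euc N) :
    kSt K U x = ∫ z in {0}ᶜ, K z * (if U x ≤ U (x + z) then 1 else -1) := by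
  refine Tendsto.limUnder_eq (tendsto_setIntegral_of_eventually_mem_iff
    (hK.mul_sign (measurableSet_le_translate hU x _)) (fun _ => measurableSet_ball.compl)
    (measurableSet_singleton 0).compl fun z => ?_)
  rcases eq_or_ne z 0 with rfl | hz
  · filter_upwards [self_mem_nhdsWithin] with δ (hδ : 0 < δ)
    simp [hδ]
  · filter_upwards [Ioo_mem_nhdsGT (norm_pos_iff.2 hz)] with δ hδ
    simp [hz, hδ.2.le]

theorem kSt_le_integral (hKnn : ∀ z, 0 ≤ K z) (hK : Integrable K) {U : Euc N → ℝ}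
    (hU : Measurable U) (x : Euc N) : kSt K U x ≤ ∫ z, K z := by
  rw [kSt_eq_setIntegral hK hU]
  calc _ ≤ ∫ z in {0}ᶜ, K z :=
        integral_mono (hK.mul_sign (measurableSet_le_translate hU x _)).integrableOn
          hK.integrableOn fun z => by split_ifs <;> linarith [hKnn z]
    _ ≤ ∫ z, K z := setIntegral_le_integral hK (.of_forall hKnn)

def stripMass (K V : Euc N → ℝ) (x₀ : Euc N) (c : ℝ) : ℝ :=
  ∫ z in {z | V x₀ - c ≤ V (x₀ + z) ∧ V (x₀ + z) < V x₀}, K z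

theorem measurableSet_strip {V : Euc N → ℝ} (hV : Measurable V) (x₀ : Euc N) (c : ℝ) :
    MeasurableSet {z | V x₀ - c ≤ V (x₀ + z) ∧ V (x₀ + z) < V x₀} :=
  (measurableSet_le_translate hV x₀ _).inter
    (measurableSet_lt (hV.comp (measurable_const_add x₀)) measurable_const)

theorem stripMass_nonneg (hKnn : ∀ z, 0 ≤ K z) (V : Euc N → ℝ) (x₀ : Euc N) (c : ℝ) :
    0 ≤ stripMass K V x₀ c :=
  setIntegral_nonneg_of_ae (.of_forall hKnn)

theorem tendsto_stripMass (hK : Integrable K) {V : Euc N → ℝ} (hV : Measurable V) (x₀ : Euc N) :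
    Tendsto (stripMass K V x₀) (𝓝 0) (𝓝 0) := by
  have h := tendsto_setIntegral_of_eventually_mem_iff (l := 𝓝 0) hK (measurableSet_strip hV x₀)
    MeasurableSet.empty fun z => ?_
  · rwa [setIntegral_empty] at h
  rcases lt_or_ge (V (x₀ + z)) (V x₀) with hz | hz
  · filter_upwards [Iio_mem_nhds (sub_pos.2 hz)] with c hc
    simp only [mem_empty_iff_false, iff_false, not_and, not_lt]
    intro h; linarith [mem_Iio.1 hc]
  · exact .of_forall fun c => by simp [not_lt.2 hz]

theorem kSt_le_kSt_add_stripMass (hKnn : ∀ z, 0 ≤ K z) (hK : Integrable K) {U V : Euc N → ℝ}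
    (hU : Measurable U) (hV : Measurable V) {y x₀ : Euc N} {c : ℝ}
    (hsub : ∀ z, K z ≠ 0 → U y ≤ U (y + z) → V x₀ - c ≤ V (x₀ + z)) :
    kSt K U y ≤ kSt K V x₀ + 2 * stripMass K V x₀ c := by
  rw [kSt_eq_setIntegral hK hU, kSt_eq_setIntegral hK hV]
  refine (integral_mul_sign_le_add hKnn hK.integrableOn (measurableSet_le_translate hU y _)
    (measurableSet_le_translate hV x₀ _) (measurableSet_strip hV x₀ c)
    fun z hKz hz => (le_or_gt (V x₀) (V (x₀ + z))).imp_right fun h => ⟨hsub z hKz hz, h⟩).trans ?_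
  gcongr
  exact integral_mono_measure (Measure.restrict_mono subset_rfl Measure.restrict_le_self)
    (.of_forall hKnn) hK.integrableOn

end Curvature

section Modulus

variable {N : ℕ} {K : Euc N → ℝ}

/-- The modulus `o(ε, r)`: `|r| + √ε` bounds the time and space distances between the points at
which `φ` is compared, and the absolute value keeps `o` nonnegative for every `r`. -/
def stripModulus (K V : Euc N → ℝ) (x₀ : Euc N) (c C g ε r : ℝ) : ℝ :=
  (g + 1) * (2 * stripMass K V x₀ (c * (|r| + √ε)) + √ε) + C * (|r| + √ε)

theorem stripModulus_nonneg (hKnn : ∀ z, 0 ≤ K z) (V : Euc N → ℝ) (x₀ : Euc N) {c C g : ℝ}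
    (hC : 0 ≤ C) (hg : 0 ≤ g) (ε r : ℝ) : 0 ≤ stripModulus K V x₀ c C g ε r := by
  have := stripMass_nonneg hKnn V x₀ (c * (|r| + √ε))
  unfold stripModulus
  positivity

theorem two_mul_stripMass_le_stripModulus (hKnn : ∀ z, 0 ≤ K z) (V : Euc N → ℝ) (x₀ : Euc N)
    {c C g : ℝ} (hC : 0 ≤ C) (hg : 0 ≤ g) (ε r : ℝ) :
    2 * stripMass K V x₀ (c * (|r| + √ε)) ≤ stripModulus K V x₀ c C g ε r := by
  have := stripMass_nonneg hKnn V x₀ (c * (|r| + √ε))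
  unfold stripModulus
  nlinarith [Real.sqrt_nonneg ε, abs_nonneg r, mul_nonneg hC (add_nonneg (abs_nonneg r)
    (Real.sqrt_nonneg ε))]

theorem tendsto_stripModulus (hK : Integrable K) {V : Euc N → ℝ} (hV : Measurable V)
    (x₀ : Euc N) (c C g : ℝ) :
    Tendsto (fun p : ℝ × ℝ => stripModulus K V x₀ c C g p.1 p.2) (𝓝 (0, 0)) (𝓝 0) := by
  have hs : Tendsto (fun p : ℝ × ℝ => √p.1) (𝓝 (0, 0)) (𝓝 0) := by
    simpa [Function.comp_def] using
      (Real.continuous_sqrt.comp continuous_fst).tendsto ((0 : ℝ), (0 : ℝ))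
  have hω : Tendsto (fun p : ℝ × ℝ => |p.2| + √p.1) (𝓝 (0, 0)) (𝓝 0) := by
    simpa using ((continuous_abs.comp continuous_snd).tendsto ((0 : ℝ), (0 : ℝ))).add hs
  have hm := (tendsto_stripMass hK hV x₀).comp (by simpa using hω.const_mul c)
  unfold stripModulus
  simpa using ((((hm.const_mul 2).add hs).const_mul (g + 1)).add (hω.const_mul C))

end Modulus

section Smooth

variable {E : Type*} [NormedAddCommGroup E] [InnerProductSpace ℝ E] [CompleteSpace E]

theorem norm_gradient_slice_le {F : ℝ × E → ℝ} {p q : ℝ × E} (hp : DifferentiableAt ℝ F p)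
    (hq : DifferentiableAt ℝ F q) :
    ‖gradient (fun x => F (p.1, x)) p.2‖ ≤
      ‖gradient (fun x => F (q.1, x)) q.2‖ + ‖fderiv ℝ F p - fderiv ℝ F q‖ := by
  have slice : ∀ {p : ℝ × E}, DifferentiableAt ℝ F p →
      ‖gradient (fun x => F (p.1, x)) p.2‖ =
        ‖(fderiv ℝ F p).comp (ContinuousLinearMap.inr ℝ ℝ E)‖ := fun hp => by
    rw [gradient, LinearIsometryEquiv.norm_map]
    exact congrArg _ (hp.hasFDerivAt.comp _ (hasFDerivAt_prodMk_right _ _)).fderiv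
  rw [slice hp, slice hq]
  calc _ ≤ ‖(fderiv ℝ F q).comp (ContinuousLinearMap.inr ℝ ℝ E)‖ +
        ‖(fderiv ℝ F p - fderiv ℝ F q).comp (ContinuousLinearMap.inr ℝ ℝ E)‖ := by
        rw [ContinuousLinearMap.sub_comp]; exact norm_le_insert' _ _
    _ ≤ _ := by
      gcongr
      exact (ContinuousLinearMap.opNorm_comp_le _ _).trans
        (mul_le_of_le_one_right (norm_nonneg _) (ContinuousLinearMap.norm_inr_le_one _ _ _))

theorem exists_lipschitzOnWith_of_contDiffOn [ProperSpace E] {φ : ℝ → E → ℝ} {T t₀ : ℝ}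
    (hφ : ContDiffOn ℝ 2 (fun p : ℝ × E => φ p.1 p.2) (Ioc 0 T ×ˢ univ)) (ht₀ : t₀ ∈ Ioo 0 T)
    (x₀ : E) {R : ℝ} (hR : 0 ≤ R) :
    ∃ ρ > 0, ∃ L₁ L₂ : ℝ≥0,
      LipschitzOnWith L₁ (fun p : ℝ × E => φ p.1 p.2) (closedBall t₀ ρ ×ˢ closedBall x₀ R) ∧
      ∀ p ∈ closedBall t₀ ρ ×ˢ closedBall x₀ R,
        ‖gradient (φ p.1) p.2‖ ≤ ‖gradient (φ t₀) x₀‖ + L₂ * dist p (t₀, x₀) := by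
  set F := fun p : ℝ × E => φ p.1 p.2
  obtain ⟨ρ, hρ, hρt₀, hρT⟩ : ∃ ρ, 0 < ρ ∧ ρ < t₀ ∧ ρ < T - t₀ :=
    ⟨min t₀ (T - t₀) / 2, by have := sub_pos.2 ht₀.2; have := ht₀.1; positivity,
      by linarith [min_le_left t₀ (T - t₀), ht₀.1], by linarith [min_le_right t₀ (T - t₀), ht₀.2]⟩
  set D := closedBall t₀ ρ ×ˢ closedBall x₀ R
  have hU : IsOpen (Ioo 0 T ×ˢ (univ : Set E)) := isOpen_Ioo.prod isOpen_univ
  have hDU : D ⊆ Ioo 0 T ×ˢ univ := by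
    refine prod_mono ?_ (subset_univ _)
    rw [Real.closedBall_eq_Icc]
    exact Icc_subset_Ioo (by linarith) (by linarith)
  have hF : ContDiffOn ℝ 2 F (Ioo 0 T ×ˢ univ) :=
    hφ.mono (prod_mono Ioo_subset_Ioc_self subset_rfl)
  have hD : Convex ℝ D ∧ IsCompact D :=
    ⟨(convex_closedBall _ _).prod (convex_closedBall _ _),
      (isCompact_closedBall _ _).prod (isCompact_closedBall _ _)⟩
  obtain ⟨L₁, hL₁⟩ := (hF.mono hDU).exists_lipschitzOnWith two_ne_zero hD.1 hD.2
  obtain ⟨L₂, hL₂⟩ := ((hF.fderiv_of_isOpen hU (m := 1) (by norm_num)).mono hDU)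
    |>.exists_lipschitzOnWith one_ne_zero hD.1 hD.2
  have hdiff : ∀ p ∈ D, DifferentiableAt ℝ F p := fun p hp =>
    (hF.contDiffAt (hU.mem_nhds (hDU hp))).differentiableAt two_ne_zero
  have hc : (t₀, x₀) ∈ D := ⟨mem_closedBall_self hρ.le, mem_closedBall_self hR⟩
  refine ⟨ρ, hρ, L₁, L₂, hL₁, fun p hp => ?_⟩
  calc _ ≤ _ := norm_gradient_slice_le (hdiff p hp) (hdiff _ hc)
    _ ≤ _ := by
      gcongr
      exact (dist_eq_norm _ _).symm.trans_le (hL₂.dist_le_mul p hp _ hc)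

end Smooth

section Lipschitz

variable {E : Type*} [NormedAddCommGroup E] {φ : ℝ → E → ℝ} {t₀ ρ R ω s : ℝ} {x₀ y : E}
  {L : ℝ≥0}

theorem step_dist_le {t t₀ τ r ε : ℝ} {x y : E} (htx : dist (t, x) (t₀, x₀) < r)
    (hyx : dist y x < ε) (hτ : 0 ≤ τ) (hτε : τ ≤ √ε) (hε : ε ≤ √ε) :
    dist (t + τ) t₀ ≤ r + √ε ∧ dist x x₀ ≤ r + √ε ∧ dist y x₀ ≤ r + √ε := by
  rw [Prod.dist_eq, max_lt_iff] at htx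
  obtain ⟨ht, hx⟩ := htx
  dsimp only at ht hx
  have hs := Real.sqrt_nonneg ε
  refine ⟨?_, by linarith, by linarith [dist_triangle y x x₀]⟩
  rw [Real.dist_eq] at ht ⊢
  rw [abs_le]
  constructor <;> linarith [abs_lt.1 ht]

theorem bddBelow_image_ball
    (hφ : LipschitzOnWith L (fun p : ℝ × E => φ p.1 p.2) (closedBall t₀ ρ ×ˢ closedBall x₀ (R + 1)))
    (hs : dist s t₀ ≤ ρ) (hy : dist y x₀ ≤ 1) :
    BddBelow ((fun z => φ s z) '' ball y R) := by
  refine ⟨φ s y - L * R, forall_mem_image.2 fun w hw => ?_⟩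
  have hw' : dist w y < R := hw
  have h := hφ.dist_le_mul (s, w) ⟨hs, mem_closedBall.2 (by linarith [dist_triangle w y x₀])⟩
    (s, y) ⟨hs, mem_closedBall.2 (by linarith [dist_nonneg (x := w) (y := y)])⟩
  dsimp only at h
  rw [dist_prod_same_left, Real.dist_eq] at h
  have hL : (L : ℝ) * dist w y ≤ L * R := mul_le_mul_of_nonneg_left hw'.le L.coe_nonneg
  linarith [(abs_le.1 h).1]

theorem sub_le_of_lt_sInf_superlevel {s' e : ℝ} {x : E} {ψ : E → ℝ}
    (hφ : LipschitzOnWith L (fun p : ℝ × E => φ p.1 p.2) (closedBall t₀ ρ ×ˢ closedBall x₀ (R + 1)))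
    (hωρ : ω ≤ ρ) (hω1 : ω ≤ 1) (hs : dist s t₀ ≤ ω) (hs' : dist s' t₀ ≤ ω) (hx : dist x x₀ ≤ ω)
    (hy : dist y x₀ ≤ ω) (he : e ≤ ω)
    (hinf : φ s' x - e < sInf ((fun z => φ s z) '' {z | z ∈ ball y R ∧ ψ y ≤ ψ z}))
    {z : E} (hz : ‖z‖ < R) (hψz : ψ y ≤ ψ (y + z)) :
    φ t₀ x₀ - (2 * L + 1) * ω ≤ φ t₀ (x₀ + z) := by
  have hD : ∀ {a w}, dist a t₀ ≤ ω → dist w x₀ ≤ R + ω →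
      (a, w) ∈ closedBall t₀ ρ ×ˢ closedBall x₀ (R + 1) := fun ha hw =>
    ⟨mem_closedBall.2 (ha.trans hωρ), mem_closedBall.2 (hw.trans (by linarith))⟩
  have hyz : dist (y + z) y = ‖z‖ := dist_self_add_left z y
  have hω : 0 ≤ ω := dist_nonneg.trans hy
  have hR : 0 ≤ R := (norm_nonneg z).trans hz.le
  have hinf_le : sInf ((fun z => φ s z) '' {z | z ∈ ball y R ∧ ψ y ≤ ψ z}) ≤ φ s (y + z) :=
    csInf_le ((bddBelow_image_ball hφ (hs.trans hωρ) (hy.trans hω1)).mono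
      (image_mono fun _ hz => hz.1)) ⟨y + z, ⟨by rwa [mem_ball, hyz], hψz⟩, rfl⟩
  have hnear := hφ.dist_le_mul (s, y + z) (hD hs (by linarith [dist_triangle (y + z) y x₀]))
    (t₀, x₀ + z) (hD (by simp [hω]) (by simp [dist_self_add_left]; linarith))
  have hcur := hφ.dist_le_mul (s', x) (hD hs' (by linarith)) (t₀, x₀) (hD (by simp [hω])
    (by simp; linarith))
  simp only [Prod.dist_eq, dist_add_right, Real.dist_eq] at hnear hcur hs hs'
  have h1 : (L : ℝ) * max |s - t₀| (dist y x₀) ≤ L * ω :=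
    mul_le_mul_of_nonneg_left (max_le hs hy) L.coe_nonneg
  have h2 : (L : ℝ) * max |s' - t₀| (dist x x₀) ≤ L * ω :=
    mul_le_mul_of_nonneg_left (max_le hs' hx) L.coe_nonneg
  linarith [(abs_le.1 hnear).2, (abs_le.1 hcur).1]

end Lipschitz

theorem cutC_div_eq_min {ε κ : ℝ} (hε : 0 < ε) (hκ : 0 < κ) (hκε : κ * √ε ≤ 1) :
    cutC ε (ε / κ) = min (ε / κ) (ε ^ ((1:ℝ)/2)) := by
  rw [cutC, max_eq_left]
  rw [le_div_iff₀ hκ, show (3:ℝ)/2 = 1 + 1/2 by norm_num, Real.rpow_add hε, Real.rpow_one,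
    ← Real.sqrt_eq_rpow]
  nlinarith

theorem min_div_mul_max {ε κ : ℝ} (hε : 0 < ε) (hκ : 0 < κ) :
    min (ε / κ) √ε * max κ √ε = ε := by
  have hsq := Real.mul_self_sqrt hε.le
  have hs := Real.sqrt_pos.2 hε
  rcases le_total κ √ε with h | h
  · rw [min_eq_right ((le_div_iff₀ hκ).2 (by nlinarith)), max_eq_right h, hsq]
  · rw [min_eq_left ((div_le_iff₀ hκ).2 (by nlinarith)), max_eq_left h, div_mul_cancel₀ _ hκ.ne']

theorem TPg_eq_min {N : ℕ} {K : Euc N → ℝ} {ε : ℝ} {y : Euc N} {ψ : Euc N → ℝ}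
    (hψ : gradient ψ y ≠ 0) (hκ : 0 < kSt K ψ y) (hε : 0 < ε) (hκε : kSt K ψ y * √ε ≤ 1) :
    TPg K ε y ψ = min (ε / kSt K ψ y) √ε := by
  rw [TPg, if_pos ⟨hψ, hκ⟩, cutC_div_eq_min hε hκ hκε, Real.sqrt_eq_rpow]

theorem mul_le_mul_add_of_eq_mul_max {ε T s κ κ₀ h g G L ω C : ℝ} (hT : 0 ≤ T)
    (hεT : ε = T * max κ s) (hκ₀ : κ ≤ κ₀ + h) (hh : 0 ≤ h) (hs : 0 ≤ s) (hg : 0 ≤ g)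
    (hG : G ≤ g + L * ω) (hLω : 0 ≤ L * ω) (hκC : κ ≤ C) (hsC : s ≤ C) :
    ε * G ≤ T * (max κ₀ 0 * g + ((g + 1) * (h + s) + C * L * ω)) := by
  have hm : 0 ≤ max κ s := hs.trans (le_max_right _ _)
  have hmax : max κ s ≤ max κ₀ 0 + (h + s) :=
    max_le (by linarith [le_max_left κ₀ 0]) (by linarith [le_max_right κ₀ 0])
  rw [hεT, mul_assoc]
  refine mul_le_mul_of_nonneg_left ?_ hT
  calc max κ s * G ≤ max κ s * g + max κ s * (L * ω) := by rw [← mul_add]; gcongr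
    _ ≤ (max κ₀ 0 + (h + s)) * g + C * (L * ω) := by gcongr; exact max_le hκC hsC
    _ ≤ _ := by nlinarith

theorem key_claim_of_lipschitz {N : ℕ} {R ρ t₀ ε r t : ℝ} {K : Euc N → ℝ}
    {φ : ℝ → Euc N → ℝ} {x₀ x y : Euc N} {ψ : Euc N → ℝ} {L₁ L₂ : ℝ≥0}
    (hR : 0 < R) (hKnn : ∀ z, 0 ≤ K z) (hKsupp : Function.support K ⊆ ball 0 R)
    (hK : Integrable K) (hφ₀ : Continuous (φ t₀))
    (hLip : LipschitzOnWith L₁ (fun p : ℝ × Euc N => φ p.1 p.2)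
      (closedBall t₀ ρ ×ˢ closedBall x₀ (R + 1)))
    (hgrad : ∀ p ∈ closedBall t₀ ρ ×ˢ closedBall x₀ (R + 1),
      ‖gradient (φ p.1) p.2‖ ≤ ‖gradient (φ t₀) x₀‖ + L₂ * dist p (t₀, x₀))
    (hε : 0 < ε) (hεK : √ε * max (∫ z, K z) 1 ≤ 1) (hωρ : |r| + √ε ≤ ρ) (hω1 : |r| + √ε ≤ 1)
    (htx : dist (t, x) (t₀, x₀) < r) (hyψ : (y, ψ) ∈ Cplus ε x) (hψ : gradient ψ y ≠ 0)
    (hκ : 0 < kSt K ψ y)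
    (hInf : sInf ((fun z => φ (t + TPg K ε y ψ) z) '' Pplus K R x y ψ) >
      φ (t + ε ^ 2) x - ε ^ 3) :
    (sInf ((fun z => φ (t + TPg K ε y ψ) z) '' Pplus K R x y ψ) - φ (t + TPg K ε y ψ) y ≤
      TPg K ε y ψ * ((if gradient (φ t₀) x₀ ≠ 0 then
          max (kSt K (φ t₀) x₀) 0 * ‖gradient (φ t₀) x₀‖ else 0) +
        stripModulus K (φ t₀) x₀ (2 * L₁ + 1) (max (∫ z, K z) 1 * L₂) ‖gradient (φ t₀) x₀‖ ε r) -
      ε * ‖gradient (φ (t + TPg K ε y ψ)) y‖) ∧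
    (gradient (φ t₀) x₀ ≠ 0 →
      kSt K ψ y ≤ kSt K (φ t₀) x₀ +
        stripModulus K (φ t₀) x₀ (2 * L₁ + 1) (max (∫ z, K z) 1 * L₂) ‖gradient (φ t₀) x₀‖ ε r ∧
      TPg K ε y ψ = min (ε / kSt K ψ y) (ε ^ ((1:ℝ)/2))) := by
  obtain ⟨hyx, hψ2, -⟩ := hyψ
  set C := max (∫ z, K z) 1
  set g₀ := gradient (φ t₀) x₀
  have hs := Real.sqrt_nonneg ε
  have hsC : √ε ≤ C := by nlinarith [le_max_right (∫ z, K z) 1]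
  have hε1 : ε ≤ √ε ∧ ε ≤ 1 := by
    constructor <;> nlinarith [Real.mul_self_sqrt hε.le, le_max_right (∫ z, K z) 1]
  have hκC : kSt K ψ y ≤ C :=
    (kSt_le_integral hKnn hK hψ2.continuous.measurable y).trans (le_max_left _ _)
  have hTP := TPg_eq_min hψ hκ hε (by nlinarith)
  set T' := TPg K ε y ψ
  have hT0 : 0 < T' := hTP ▸ lt_min (div_pos hε hκ) (Real.sqrt_pos.2 hε)
  have hr : 0 < r := dist_nonneg.trans_lt htx
  rw [abs_of_pos hr] at hωρ hω1
  set ω := r + √ε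
  obtain ⟨hdT, hdx, hdy⟩ := step_dist_le htx hyx hT0.le (hTP ▸ min_le_right _ _) hε1.1
  have hdε := (step_dist_le htx hyx (sq_nonneg ε) (by nlinarith) hε1.1).1
  have hε3 : ε ^ 3 ≤ ω := by nlinarith [pow_le_pow_of_le_one hε.le hε1.2 (show 1 ≤ 3 by norm_num)]
  rw [show Pplus K R x y ψ = {z | z ∈ ball y R ∧ ψ y ≤ ψ z} from if_pos ⟨hψ, hκ⟩] at hInf ⊢
  have hκ_le : kSt K ψ y ≤ kSt K (φ t₀) x₀ + 2 * stripMass K (φ t₀) x₀ ((2 * L₁ + 1) * ω) :=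
    kSt_le_kSt_add_stripMass hKnn hK hψ2.continuous.measurable hφ₀.measurable fun z hKz hz =>
      sub_le_of_lt_sInf_superlevel hLip hωρ hω1 hdT hdε hdx hdy hε3 hInf
        (mem_ball_zero_iff.1 (hKsupp hKz)) hz
  have hgradT : ‖gradient (φ (t + T')) y‖ ≤ ‖g₀‖ + L₂ * ω := by
    refine (hgrad (t + T', y) ⟨mem_closedBall.2 (hdT.trans hωρ),
      mem_closedBall.2 (by linarith)⟩).trans ?_
    gcongr
    exact max_le hdT hdy
  have hspeed : ε * ‖gradient (φ (t + T')) y‖ ≤ T' * (max (kSt K (φ t₀) x₀) 0 * ‖g₀‖ +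
      stripModulus K (φ t₀) x₀ (2 * L₁ + 1) (C * L₂) ‖g₀‖ ε r) := by
    rw [stripModulus, abs_of_pos hr]
    exact mul_le_mul_add_of_eq_mul_max hT0.le (by rw [hTP, min_div_mul_max hε hκ]) hκ_le
      (mul_nonneg zero_le_two (stripMass_nonneg hKnn _ _ _)) hs (norm_nonneg _) hgradT
      (mul_nonneg L₂.coe_nonneg (by positivity)) hκC hsC
  have hy : y ∈ {z | z ∈ ball y R ∧ ψ y ≤ ψ z} := ⟨mem_ball_self hR, le_rfl⟩
  have hinf_le := csInf_le ((bddBelow_image_ball hLip (hdT.trans hωρ) (hdy.trans hω1)).mono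
    (image_mono (sep_subset _ _))) (mem_image_of_mem _ hy)
  rw [ite_eq_left_iff.2 fun h => by simp [not_not.1 h]]
  refine ⟨by linarith, fun _ => ⟨hκ_le.trans ?_, hTP.trans (by rw [Real.sqrt_eq_rpow])⟩⟩
  gcongr
  simpa [abs_of_pos hr] using
    two_mul_stripMass_le_stripModulus hKnn (φ t₀) x₀ (by positivity) (norm_nonneg g₀) ε r

theorem key_claim_curvature_general
    {N : ℕ} (R : ℝ) (hR : 0 < R) (T : ℝ)
    (K : Euc N → ℝ) (hK : KernelOK R K)
    (φ : ℝ → Euc N → ℝ)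
    (hφ : ContDiffOn ℝ 2 (fun p : ℝ × Euc N => φ p.1 p.2) (Ioc (0:ℝ) T ×ˢ univ))
    (t₀ : ℝ) (x₀ : Euc N) (ht₀ : t₀ ∈ Ioo (0:ℝ) T) :
    ∃ o : ℝ → ℝ → ℝ, (∀ ε r, 0 ≤ o ε r) ∧
      Tendsto (fun p : ℝ × ℝ => o p.1 p.2) (𝓝[Ioi 0 ×ˢ Ioi 0] ((0:ℝ), (0:ℝ))) (𝓝 0) ∧
      ∃ ε₀ > (0:ℝ), ∃ r₀ > (0:ℝ), ∀ ε ∈ Ioo (0:ℝ) ε₀, ∀ r ∈ Ioo (0:ℝ) r₀,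
        ∀ (t : ℝ) (x : Euc N), dist (t, x) (t₀, x₀) < r →
          ∀ (y : Euc N) (ψ : Euc N → ℝ), (y, ψ) ∈ Cplus ε x →
            gradient ψ y ≠ 0 → 0 < kSt K ψ y →
            sInf ((fun z => φ (t + TPg K ε y ψ) z) '' Pplus K R x y ψ) >
              φ (t + ε ^ 2) x - ε ^ 3 →
            (sInf ((fun z => φ (t + TPg K ε y ψ) z) '' Pplus K R x y ψ) -
                φ (t + TPg K ε y ψ) y ≤
              TPg K ε y ψ *
                ((if gradient (φ t₀) x₀ ≠ 0 then
                    max (kSt K (φ t₀) x₀) 0 * ‖gradient (φ t₀) x₀‖ else 0) + o ε r) -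
              ε * ‖gradient (φ (t + TPg K ε y ψ)) y‖) ∧
            (gradient (φ t₀) x₀ ≠ 0 →
              kSt K ψ y ≤ kSt K (φ t₀) x₀ + o ε r ∧
              TPg K ε y ψ = min (ε / kSt K ψ y) (ε ^ ((1:ℝ)/2))) := by
  have hKi := hK.integrable
  obtain ⟨ρ, hρ, L₁, L₂, hLip, hgrad⟩ :=
    exists_lipschitzOnWith_of_contDiffOn hφ ht₀ x₀ (by linarith : 0 ≤ R + 1)
  have hφ₀ : Continuous (φ t₀) := hφ.continuousOn.comp_continuous
    (continuous_const.prodMk continuous_id) fun x => ⟨Ioo_subset_Ioc_self ht₀, mem_univ x⟩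
  set C := max (∫ z, K z) 1
  have hC : 1 ≤ C := le_max_right _ _
  refine ⟨stripModulus K (φ t₀) x₀ (2 * L₁ + 1) (C * L₂) ‖gradient (φ t₀) x₀‖,
    stripModulus_nonneg hK.1 _ _ (by positivity) (norm_nonneg _),
    (tendsto_stripModulus hKi hφ₀.measurable _ _ _ _).mono_left nhdsWithin_le_nhds, ?_⟩
  set δ := min (min ρ 1 / 2) (1 / C)
  have hδ : 0 < δ := by positivity
  have hδρ : δ ≤ min ρ 1 / 2 := min_le_left _ _
  have hδC : δ * C ≤ 1 := (le_div_iff₀ (by positivity)).1 (min_le_right _ _)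
  refine ⟨δ ^ 2, by positivity, δ, hδ, fun ε hε r hr t x htx y ψ hyψ hψ hκ hInf => ?_⟩
  have hsε : √ε < δ := (Real.sqrt_lt' hδ).2 hε.2
  exact key_claim_of_lipschitz hR hK.1 hK.2.2.1 hKi hφ₀ hLip hgrad hε.1 (by nlinarith)
    (by rw [abs_of_pos hr.1]; linarith [min_le_left ρ 1, hr.2])
    (by rw [abs_of_pos hr.1]; linarith [min_le_right ρ 1, hr.2]) htx hyψ hψ hκ hInf

/-- Lemma 3.11: key claim in the proof of the estimate from above for `R^ε`. -/
theorem key_claim_curvature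
    {N : ℕ} (hN : 1 ≤ N) (R : ℝ) (hR : 0 < R) (T : ℝ) (hT : 0 < T)
    (K : Euc N → ℝ) (hK : KernelOK R K)
    (φ : ℝ → Euc N → ℝ)
    (hφ : ContDiffOn ℝ 2 (fun p : ℝ × Euc N => φ p.1 p.2) (Ioc (0:ℝ) T ×ˢ univ))
    (hφb : ∃ M, ∀ t ∈ Ioc (0:ℝ) T, ∀ x, |φ t x| ≤ M)
    (t₀ : ℝ) (x₀ : Euc N) (ht₀ : t₀ ∈ Ioo (0:ℝ) T) :
    ∃ o : ℝ → ℝ → ℝ, (∀ ε r, 0 ≤ o ε r) ∧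
      Tendsto (fun p : ℝ × ℝ => o p.1 p.2) (𝓝[Ioi 0 ×ˢ Ioi 0] ((0:ℝ), (0:ℝ))) (𝓝 0) ∧
      ∃ ε₀ > (0:ℝ), ∃ r₀ > (0:ℝ), ∀ ε ∈ Ioo (0:ℝ) ε₀, ∀ r ∈ Ioo (0:ℝ) r₀,
        ∀ (t : ℝ) (x : Euc N), dist (t, x) (t₀, x₀) < r →
          ∀ (y : Euc N) (ψ : Euc N → ℝ), (y, ψ) ∈ Cplus ε x →
            gradient ψ y ≠ 0 → 0 < kSt K ψ y →
            sInf ((fun z => φ (t + TPg K ε y ψ) z) '' Pplus K R x y ψ) >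
              φ (t + ε ^ 2) x - ε ^ 3 →
            (sInf ((fun z => φ (t + TPg K ε y ψ) z) '' Pplus K R x y ψ) -
                φ (t + TPg K ε y ψ) y ≤
              TPg K ε y ψ *
                ((if gradient (φ t₀) x₀ ≠ 0 then
                    max (kSt K (φ t₀) x₀) 0 * ‖gradient (φ t₀) x₀‖ else 0) + o ε r) -
              ε * ‖gradient (φ (t + TPg K ε y ψ)) y‖) ∧
            (gradient (φ t₀) x₀ ≠ 0 →
              kSt K ψ y ≤ kSt K (φ t₀) x₀ + o ε r ∧
              TPg K ε y ψ = min (ε / kSt K ψ y) (ε ^ ((1:ℝ)/2))) :=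
  key_claim_curvature_general R hR T K hK φ hφ t₀ x₀ ht₀
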